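/- arXiv:2006.10545 — 4 statements merged into one kernel-verified Lean document; each statement's English description precedes it below -/
import Mathlib

section
/- For every integer m ≥ 1, the following identity holds: the sum over all ordered triples (m1, m2, m3) of non-negative integers with m1 + m2 + m3 = m − 1 of (m! / (m1! · m2! · m3!)) · c(m1+2) · c(m2+2) · c(m3+2) equals m · c(m+2). -/
open Finset

/-- `c j = (2j-5)‼`, the number of leaf-labeled binary trees on `j` leaves
(note `c 2 = 0‼ = 1` by truncated subtraction, as required). -/
def treeCount (j : ℕ) : ℕ := Nat.doubleFactorial (2 * j - 5)

/-!
With `g a = treeCount (a + 2) = (2a-1)‼` and `n = m - 1`, the multinomial weight factors as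
`m!/(a! b! c!) = m · C(n, a) · C(b + c, b)`, so the left side is `m` times the iterated binomial
convolution `g ⋆ (g ⋆ g)` at `n`. The sequence `g` obeys `g (a + 1) = (2a + 1) g a`, and binomial
convolution adds the offsets of such recurrences, so `g ⋆ (g ⋆ g)` obeys
`u (n + 1) = (2n + 3) u n` with `u 0 = 1`, exactly as `n ↦ g (n + 1) = treeCount (n + 3)` does.
In generating-function terms: `g` has exponential generating function `(1 - 2x)^(-1/2)`, whose cube
`(1 - 2x)^(-3/2)` is that of `n ↦ g (n + 1)`.
-/

theorem Finset.Nat.sum_antidiagonalTuple_succ {M : Type*} [AddCommMonoid M] (k n : ℕ)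
    (f : (Fin (k + 1) → ℕ) → M) :
    ∑ x ∈ Nat.antidiagonalTuple (k + 1) n, f x =
      ∑ ij ∈ antidiagonal n, ∑ y ∈ Nat.antidiagonalTuple k ij.2, f (Fin.cons ij.1 y) := by
  have : Multiset.Nat.antidiagonalTuple (k + 1) n = (Multiset.Nat.antidiagonal n).bind
      fun ij => (Multiset.Nat.antidiagonalTuple k ij.2).map (Fin.cons ij.1) := by
    simp [Multiset.Nat.antidiagonalTuple, List.Nat.antidiagonalTuple, Multiset.Nat.antidiagonal,
      Multiset.coe_bind]
  simp only [Finset.sum, Nat.antidiagonalTuple, this, Multiset.map_bind, Multiset.sum_bind,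
    Multiset.map_map]
  rfl

theorem Finset.Nat.sum_antidiagonalTuple_three {M : Type*} [AddCommMonoid M] (n : ℕ)
    (f : ℕ → ℕ → ℕ → M) :
    ∑ x ∈ Nat.antidiagonalTuple 3 n, f (x 0) (x 1) (x 2) =
      ∑ ij ∈ antidiagonal n, ∑ kl ∈ antidiagonal ij.2, f ij.1 kl.1 kl.2 := by
  rw [sum_antidiagonalTuple_succ]
  refine sum_congr rfl fun ij _ => ?_
  rw [Nat.antidiagonalTuple_two, sum_map]
  rfl

theorem Nat.succ_factorial_div_factorial_mul_factorial_mul_factorial {a b c n : ℕ}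
    (h : a + b + c = n) :
    (n + 1).factorial / (a.factorial * b.factorial * c.factorial) =
      (n + 1) * (n.choose a * (b + c).choose b) := by
  have hbc := Nat.add_choose_mul_factorial_mul_factorial b c
  have habc := Nat.add_choose_mul_factorial_mul_factorial a (b + c)
  rw [← add_assoc, h] at habc
  refine Nat.div_eq_of_eq_mul_left (by positivity) ?_
  rw [Nat.factorial_succ, Nat.choose_symm_of_eq_add (add_assoc a b c ▸ h).symm,
    Nat.choose_symm_add, ← habc, ← hbc]
  ring

section BinomialConvolution

variable {R : Type*} [CommSemiring R]

def binomialConvolution (f g : ℕ → R) (n : ℕ) : R :=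
  ∑ ij ∈ antidiagonal n, (n.choose ij.1 : R) * (f ij.1 * g ij.2)

/-- By the Leibniz rule `(f ⋆ g)(n + 1) = (f ⋆ Δg)(n) + (Δf ⋆ g)(n)`, first-order recurrences with
the same slope `d` combine under binomial convolution by adding their offsets. -/
theorem binomialConvolution_succ_of_succ_eq_mul {f g : ℕ → R} {d p q : R}
    (hf : ∀ a, f (a + 1) = (d * a + p) * f a) (hg : ∀ b, g (b + 1) = (d * b + q) * g b)
    (n : ℕ) :
    binomialConvolution f g (n + 1) = (d * n + (p + q)) * binomialConvolution f g n := by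
  rw [binomialConvolution, sum_antidiagonal_choose_succ_mul (fun i j => f i * g j),
    ← sum_add_distrib, binomialConvolution, mul_sum]
  refine sum_congr rfl fun ij hij => ?_
  rw [HasAntidiagonal.mem_antidiagonal] at hij
  rw [hf, hg, ← Nat.choose_symm_of_eq_add hij.symm, ← hij]
  push_cast
  ring

end BinomialConvolution

theorem treeCount_add_three (a : ℕ) : treeCount (a + 3) = (2 * a + 1) * treeCount (a + 2) := by
  rcases a with _ | a
  · rfl
  · rw [treeCount, treeCount, show 2 * (a + 1 + 3) - 5 = (2 * a + 1) + 2 by omega,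
      Nat.doubleFactorial_add_two, show 2 * (a + 1 + 2) - 5 = 2 * a + 1 by omega]
    ring

theorem triple_binomialConvolution_treeCount (n : ℕ) :
    binomialConvolution (fun a => treeCount (a + 2))
      (binomialConvolution (fun a => treeCount (a + 2)) fun a => treeCount (a + 2)) n =
    treeCount (n + 3) := by
  have hrec : ∀ a : ℕ, treeCount (a + 1 + 2) = (2 * a + 1) * treeCount (a + 2) :=
    treeCount_add_three
  induction n with
  | zero => rfl
  | succ n ih =>
    rw [binomialConvolution_succ_of_succ_eq_mul hrec
      (binomialConvolution_succ_of_succ_eq_mul hrec hrec), ih, treeCount_add_three (n + 1)]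
    push_cast
    ring

theorem split_count_identity (m : ℕ) (hm : 1 ≤ m) :
    ∑ x ∈ Finset.Nat.antidiagonalTuple 3 (m - 1),
      (m.factorial / ((x 0).factorial * (x 1).factorial * (x 2).factorial)) *
        (treeCount (x 0 + 2) * treeCount (x 1 + 2) * treeCount (x 2 + 2))
      = m * treeCount (m + 2) := by
  obtain ⟨n, rfl⟩ : ∃ n, m = n + 1 := ⟨m - 1, by omega⟩
  rw [Nat.add_sub_cancel, Finset.Nat.sum_antidiagonalTuple_three (f := fun a b c =>
      (n + 1).factorial / (a.factorial * b.factorial * c.factorial) *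
        (treeCount (a + 2) * treeCount (b + 2) * treeCount (c + 2))),
    ← triple_binomialConvolution_treeCount, binomialConvolution, mul_sum]
  refine sum_congr rfl fun ij hij => ?_
  rw [binomialConvolution, mul_sum, mul_sum, mul_sum]
  refine sum_congr rfl fun kl hkl => ?_
  rw [HasAntidiagonal.mem_antidiagonal] at hij hkl
  rw [Nat.cast_id, Nat.cast_id, ← hkl,
    Nat.succ_factorial_div_factorial_mul_factorial_mul_factorial (by omega)]
  ring
end

section
/- For every ε ∈ (0, 1/3), the split-size probabilities converge to the Dirichlet(1/2,1/2,1/2) density uniformly in the bulk: as m → ∞, the supremum over all ordered triples (m1, m2, m3) of positive integers with m1 + m2 + m3 = m − 1 and min(m1, m2, m3) ≥ εm of | p_m(m1, m2, m3) · 2π · m² · (m1 m2 m3 / m³)^{1/2} − 1 | tends to 0. -/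
open Filter Real

/-- The split-size probability
`p_m(m₁,m₂,m₃) = (m!/(m₁! m₂! m₃!)) c(m₁+2) c(m₂+2) c(m₃+2) / (m c(m+2))`. -/
noncomputable def splitProb (m m1 m2 m3 : ℕ) : ℝ :=
  (m.factorial : ℝ) / ((m1.factorial : ℝ) * (m2.factorial : ℝ) * (m3.factorial : ℝ)) *
      ((treeCount (m1 + 2) : ℝ) * (treeCount (m2 + 2) : ℝ) * (treeCount (m3 + 2) : ℝ)) /
    ((m : ℝ) * (treeCount (m + 2) : ℝ))

/-!
Since `c(n+2) = (2n)! / (2ⁿ n!)`, the split probability is `p_m(m₁,m₂,m₃) = 2 C(m₁) C(m₂) C(m₃) / (m C(m))`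
with `C(n) = binom(2n, n)` and `m = m₁ + m₂ + m₃ + 1`. With the normalization `w(n) = C(n) √(πn) / 4ⁿ` the
scaled quantity is exactly `w(m₁) w(m₂) w(m₃) / w(m)`. Stirling's formula gives `w(n) → 1`, and in the
bulk `m₁, m₂, m₃ ≥ εm` all tend to infinity.
-/

open Nat Topology Stirling

theorem centralBinom_mul_factorial_sq (n : ℕ) : n.centralBinom * n ! ^ 2 = (2 * n)! := by
  simpa [centralBinom_eq_two_mul_choose, two_mul, sq, mul_assoc] using
    choose_mul_factorial_mul_factorial (Nat.le_add_left n n)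

theorem two_pow_mul_treeCount_add_two (n : ℕ) :
    2 ^ n * treeCount (n + 2) = n.centralBinom * n ! := by
  have hfact : (2 * n)! = 2 ^ n * n ! * treeCount (n + 2) := by
    rcases n with _ | n
    · rfl
    rw [treeCount, show 2 * (n + 1 + 2) - 5 = 2 * n + 1 by omega,
      show 2 * (n + 1) = 2 * n + 1 + 1 by omega, factorial_eq_mul_doubleFactorial,
      show 2 * n + 1 + 1 = 2 * (n + 1) by omega, doubleFactorial_two_mul]
  apply Nat.eq_of_mul_eq_mul_right (factorial_pos n)
  rw [mul_assoc _ n !, ← sq, centralBinom_mul_factorial_sq, hfact]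
  ring

theorem splitProb_eq_centralBinom (m1 m2 m3 : ℕ) :
    splitProb (m1 + m2 + m3 + 1) m1 m2 m3 =
      2 * (m1.centralBinom * m2.centralBinom * m3.centralBinom) /
        ((m1 + m2 + m3 + 1) * (m1 + m2 + m3 + 1).centralBinom) := by
  have htree (n : ℕ) : (treeCount (n + 2) : ℝ) = n.centralBinom * n ! / 2 ^ n := by
    rw [eq_div_iff (by positivity), mul_comm]
    exact_mod_cast two_pow_mul_treeCount_add_two n
  simp only [splitProb, htree, pow_succ, pow_add]
  push_cast
  field_simp

noncomputable def normalizedCentralBinom (n : ℕ) : ℝ := n.centralBinom * √(π * n) / 4 ^ n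

theorem normalizedCentralBinom_eq_stirlingSeq {n : ℕ} (hn : n ≠ 0) :
    normalizedCentralBinom n = √π * stirlingSeq (2 * n) / stirlingSeq n ^ 2 := by
  have hbinom : (n.centralBinom : ℝ) * n ! ^ 2 = (2 * n)! := by
    exact_mod_cast centralBinom_mul_factorial_sq n
  have hn' : (0 : ℝ) < n := by positivity
  have hsqrt : √(2 * ((2 * n : ℕ) : ℝ)) = 2 * √(n : ℝ) := by
    rw [show 2 * ((2 * n : ℕ) : ℝ) = 2 ^ 2 * n by push_cast; ring, sqrt_mul (by positivity),
      sqrt_sq zero_le_two]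
  have hpow : (((2 * n : ℕ) : ℝ) / exp 1) ^ (2 * n) = 4 ^ n * ((n / exp 1) ^ n) ^ 2 := by
    push_cast
    rw [mul_div_assoc, mul_pow, pow_mul, pow_mul, ← pow_mul _ n 2, mul_comm n 2, pow_mul]
    norm_num
  rw [normalizedCentralBinom, stirlingSeq, stirlingSeq, hsqrt, hpow, ← hbinom,
    sqrt_mul pi_pos.le, sqrt_mul zero_le_two]
  have : 0 < √(n : ℝ) := sqrt_pos.2 hn'
  field_simp
  rw [sq_sqrt zero_le_two]

theorem tendsto_normalizedCentralBinom :
    Tendsto normalizedCentralBinom atTop (𝓝 1) := by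
  have hlim : Tendsto (fun n ↦ √π * stirlingSeq (2 * n) / stirlingSeq n ^ 2) atTop
      (𝓝 (√π * √π / √π ^ 2)) :=
    (tendsto_const_nhds.mul (tendsto_stirlingSeq_sqrt_pi.comp
      (tendsto_id.const_mul_atTop' two_pos))).div
      (tendsto_stirlingSeq_sqrt_pi.pow 2) (by positivity)
  rw [← sq, div_self (by positivity)] at hlim
  exact hlim.congr' (eventually_ne_atTop 0 |>.mono fun n hn ↦
    (normalizedCentralBinom_eq_stirlingSeq hn).symm)

theorem splitProb_mul_eq_normalizedCentralBinom (m1 m2 m3 : ℕ) :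
    splitProb (m1 + m2 + m3 + 1) m1 m2 m3 * (2 * π) * ((m1 + m2 + m3 + 1 : ℕ) : ℝ) ^ 2 *
        √((m1 : ℝ) * m2 * m3 / ((m1 + m2 + m3 + 1 : ℕ) : ℝ) ^ 3) =
      normalizedCentralBinom m1 * normalizedCentralBinom m2 * normalizedCentralBinom m3 /
        normalizedCentralBinom (m1 + m2 + m3 + 1) := by
  rw [splitProb_eq_centralBinom]
  have hm0 : (0 : ℝ) < ((m1 + m2 + m3 + 1 : ℕ) : ℝ) := by positivity
  have hsqrt : √((m1 : ℝ) * m2 * m3 / ((m1 + m2 + m3 + 1 : ℕ) : ℝ) ^ 3) =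
      √(m1 : ℝ) * √(m2 : ℝ) * √(m3 : ℝ) /
        (((m1 + m2 + m3 + 1 : ℕ) : ℝ) * √((m1 + m2 + m3 + 1 : ℕ) : ℝ)) := by
    rw [sqrt_div' _ (by positivity), sqrt_mul' _ (by positivity), sqrt_mul' _ (by positivity),
      pow_succ, sqrt_mul' _ hm0.le, sqrt_sq hm0.le]
  have : 0 < √((m1 + m2 + m3 + 1 : ℕ) : ℝ) := by positivity
  have : 0 < √π := by positivity
  simp only [normalizedCentralBinom, hsqrt, sqrt_mul pi_pos.le, pow_add]
  field_simp
  rw [sq_sqrt pi_pos.le]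
  push_cast
  ring

theorem Filter.Tendsto.normalizedCentralBinom_ratio {ι : Type*} {l : Filter ι} {a b c : ι → ℕ}
    (ha : Tendsto a l atTop) (hb : Tendsto b l atTop) (hc : Tendsto c l atTop) :
    Tendsto (fun i ↦ normalizedCentralBinom (a i) * normalizedCentralBinom (b i) *
      normalizedCentralBinom (c i) / normalizedCentralBinom (a i + b i + c i + 1)) l (𝓝 1) := by
  have hsum : Tendsto (fun i ↦ a i + b i + c i + 1) l atTop :=
    tendsto_atTop_mono (fun i ↦ by omega) ha
  have h := tendsto_normalizedCentralBinom
  simpa only [Function.comp_def, Pi.div_def, mul_one, div_one] using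
    (((h.comp ha).mul (h.comp hb)).mul (h.comp hc)).div (h.comp hsum) one_ne_zero

theorem splitProb_dirichlet_uniform_general (ε : ℝ) (hε0 : 0 < ε) :
    ∀ δ > 0, ∃ M : ℕ, ∀ m ≥ M, ∀ m1 m2 m3 : ℕ,
      0 < m1 → 0 < m2 → 0 < m3 → m1 + m2 + m3 = m - 1 →
      ε * m ≤ (m1 : ℝ) → ε * m ≤ (m2 : ℝ) → ε * m ≤ (m3 : ℝ) →
      |splitProb m m1 m2 m3 * (2 * Real.pi) * (m : ℝ) ^ 2 *
          Real.sqrt ((m1 : ℝ) * (m2 : ℝ) * (m3 : ℝ) / (m : ℝ) ^ 3) - 1| < δ := by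
  intro δ hδ
  have hlim : Tendsto (fun x : ℕ × ℕ × ℕ ↦ normalizedCentralBinom x.1 *
      normalizedCentralBinom x.2.1 * normalizedCentralBinom x.2.2 /
      normalizedCentralBinom (x.1 + x.2.1 + x.2.2 + 1)) atTop (𝓝 1) := by
    rw [← prod_atTop_atTop_eq, ← prod_atTop_atTop_eq]
    exact tendsto_fst.normalizedCentralBinom_ratio (tendsto_fst.comp tendsto_snd)
      (tendsto_snd.comp tendsto_snd)
  obtain ⟨⟨N1, N2, N3⟩, hN⟩ := Metric.tendsto_atTop.1 hlim δ hδ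
  refine ⟨⌈(N1 + N2 + N3 : ℕ) / ε⌉₊, fun m hm m1 m2 m3 h1 _ _ hsum hε1 hε2 hε3 ↦ ?_⟩
  have hN_le (i : ℕ) (hi : ε * m ≤ i) : N1 + N2 + N3 ≤ i := by
    have : ((N1 + N2 + N3 : ℕ) : ℝ) ≤ ε * m := by
      rw [← div_le_iff₀' hε0]
      exact (Nat.le_ceil _).trans (by exact_mod_cast hm)
    exact_mod_cast this.trans hi
  have hN1 := hN_le m1 hε1
  have hN2 := hN_le m2 hε2
  have hN3 := hN_le m3 hε3
  obtain rfl : m = m1 + m2 + m3 + 1 := by omega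
  rw [splitProb_mul_eq_normalizedCentralBinom, ← Real.dist_eq]
  exact hN (m1, m2, m3) (by simp only [ge_iff_le, Prod.mk_le_mk]; omega)

/-- Uniform convergence, in the bulk, of the split-size probabilities to the
Dirichlet(1/2,1/2,1/2) density. -/
theorem splitProb_dirichlet_uniform (ε : ℝ) (hε0 : 0 < ε) (hε : ε < 1 / 3) :
    ∀ δ > 0, ∃ M : ℕ, ∀ m ≥ M, ∀ m1 m2 m3 : ℕ,
      0 < m1 → 0 < m2 → 0 < m3 → m1 + m2 + m3 = m - 1 →
      ε * m ≤ (m1 : ℝ) → ε * m ≤ (m2 : ℝ) → ε * m ≤ (m3 : ℝ) →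
      |splitProb m m1 m2 m3 * (2 * Real.pi) * (m : ℝ) ^ 2 *
          Real.sqrt ((m1 : ℝ) * (m2 : ℝ) * (m3 : ℝ) / (m : ℝ) ^ 3) - 1| < δ :=
  splitProb_dirichlet_uniform_general ε hε0
end

section
/- Fix β ∈ (0, 1) and ε ∈ (0, 1/2). For positive integers m and a, a′ ≤ m, let M_{m,a,a′} denote a hypergeometric random variable with P(M_{m,a,a′} = j) = C(a, j) · C(m − a, a′ − j) / C(m, a′) for max(0, a + a′ − m) ≤ j ≤ min(a, a′). Then, as m → ∞, the supremum over all integers a, a′ with εm ≤ a ≤ (1−ε)m and εm ≤ a′ ≤ (1−ε)m of | E[(M_{m,a,a′})^β] / (a a′ / m)^β − 1 | tends to 0. -/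
open Finset Real

/-- The `β`-th moment `E[M^β]` of the hypergeometric distribution with parameters
`(m, a, a')`, with the convention `0^β = 0` (valid for `β > 0` via `rpow`). -/
noncomputable def hypMoment (m a a' : ℕ) (β : ℝ) : ℝ :=
  ∑ j ∈ Finset.range (min a a' + 1),
    (j : ℝ) ^ β * ((a.choose j * (m - a).choose (a' - j) : ℕ) : ℝ) / (m.choose a' : ℝ)

/-!
Let `μ = a a' / m = E[M]`. Since `x ↦ x ^ β` is concave, Jensen gives `E[M ^ β] ≤ μ ^ β`.
Conversely `x ^ β ≥ μ ^ β (1 - η - (x - μ)² / (η μ)²)` for every `x ≥ 0` and `η > 0`, so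
`E[M ^ β] ≥ μ ^ β (1 - η - Var M / (η μ)²)`, and `Var M ≤ μ`. In the bulk `μ ≥ ε² m`, so both
bounds tend to `μ ^ β`. The mean and variance come from the factorial moments
`E[C(M, s)] = C(a, s) C(a', s) / C(m, s)`, a Vandermonde convolution.
-/

theorem Nat.sum_choose_mul_choose_mul_choose {s k : ℕ} (hsk : s ≤ k) (a b : ℕ) :
    ∑ j ∈ range (k + 1), a.choose j * b.choose (k - j) * j.choose s =
      a.choose s * (a - s + b).choose (k - s) := by
  rw [show k + 1 = s + (k - s + 1) by omega, sum_range_add,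
    sum_eq_zero fun j hj ↦ by simp [Nat.choose_eq_zero_of_lt (mem_range.1 hj)], zero_add,
    Nat.add_choose_eq, Nat.sum_antidiagonal_eq_sum_range_succ_mk, mul_sum]
  refine sum_congr rfl fun i _ ↦ ?_
  rw [show k - (s + i) = k - s - i by omega, mul_right_comm,
    Nat.choose_mul (Nat.le_add_right s i), Nat.add_sub_cancel_left, mul_assoc]

section Moments

variable {ι : Type*} {s : Finset ι} {w x : ι → ℝ} {β : ℝ}

theorem sum_mul_rpow_le_rpow_sum_mul (hβ0 : 0 ≤ β) (hβ1 : β ≤ 1) (hw : ∀ i ∈ s, 0 ≤ w i)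
    (hw1 : ∑ i ∈ s, w i = 1) (hx : ∀ i ∈ s, 0 ≤ x i) :
    ∑ i ∈ s, w i * x i ^ β ≤ (∑ i ∈ s, w i * x i) ^ β :=
  (concaveOn_rpow hβ0 hβ1).le_map_sum hw hw1 hx

-- Below `(1 - η) μ` the left-hand side is negative; above it, `y ^ β ≥ (1 - η) ^ β μ ^ β`.
theorem rpow_mul_sub_le_rpow {μ η : ℝ} (hβ0 : 0 ≤ β) (hβ1 : β ≤ 1) (hμ : 0 < μ) (hη : 0 < η)
    {y : ℝ} (hy : 0 ≤ y) : μ ^ β * (1 - η - (y - μ) ^ 2 / (η * μ) ^ 2) ≤ y ^ β := by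
  have hμβ : 0 < μ ^ β := rpow_pos_of_pos hμ β
  have hdev : 0 ≤ (y - μ) ^ 2 / (η * μ) ^ 2 := by positivity
  by_cases hclose : η ≤ 1 ∧ (1 - η) * μ ≤ y
  · obtain ⟨hη1, hy⟩ := hclose
    calc μ ^ β * (1 - η - (y - μ) ^ 2 / (η * μ) ^ 2) ≤ μ ^ β * (1 - η) ^ β := by
          refine mul_le_mul_of_nonneg_left ?_ hμβ.le
          linarith [self_le_rpow_of_le_one (by linarith : 0 ≤ 1 - η) (by linarith) hβ1]
      _ = ((1 - η) * μ) ^ β := by rw [mul_rpow (by linarith) hμ.le, mul_comm]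
      _ ≤ y ^ β := rpow_le_rpow (by nlinarith) hy hβ0
  · refine (mul_nonpos_of_nonneg_of_nonpos hμβ.le ?_).trans (rpow_nonneg hy β)
    rcases not_and_or.1 hclose with hη1 | hfar
    · linarith
    · have : (η * μ) ^ 2 ≤ (y - μ) ^ 2 := by
        rw [← neg_sub, neg_sq]
        exact pow_le_pow_left₀ (by positivity) (by linarith) 2
      have : 1 ≤ (y - μ) ^ 2 / (η * μ) ^ 2 := (one_le_div (by positivity)).2 this
      linarith

theorem rpow_mul_sub_le_sum_mul_rpow {μ η : ℝ} (hβ0 : 0 ≤ β) (hβ1 : β ≤ 1) (hμ : 0 < μ)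
    (hη : 0 < η) (hw : ∀ i ∈ s, 0 ≤ w i) (hw1 : ∑ i ∈ s, w i = 1) (hx : ∀ i ∈ s, 0 ≤ x i) :
    μ ^ β * (1 - η - (∑ i ∈ s, w i * (x i - μ) ^ 2) / (η * μ) ^ 2) ≤
      ∑ i ∈ s, w i * x i ^ β := by
  calc μ ^ β * (1 - η - (∑ i ∈ s, w i * (x i - μ) ^ 2) / (η * μ) ^ 2)
      = (∑ i ∈ s, w i) * (μ ^ β * (1 - η)) -
          μ ^ β / (η * μ) ^ 2 * ∑ i ∈ s, w i * (x i - μ) ^ 2 := by rw [hw1]; ring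
    _ = ∑ i ∈ s, w i * (μ ^ β * (1 - η - (x i - μ) ^ 2 / (η * μ) ^ 2)) := by
        rw [sum_mul, mul_sum, ← sum_sub_distrib]
        exact sum_congr rfl fun i _ ↦ by ring
    _ ≤ ∑ i ∈ s, w i * x i ^ β :=
        sum_le_sum fun i hi ↦
          mul_le_mul_of_nonneg_left (rpow_mul_sub_le_rpow hβ0 hβ1 hμ hη (hx i hi)) (hw i hi)

end Moments

noncomputable def hypergeom (m a a' j : ℕ) : ℝ :=
  ((a.choose j * (m - a).choose (a' - j) : ℕ) : ℝ) / m.choose a'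

namespace hypergeom

variable {m a a' : ℕ}

theorem nonneg (j : ℕ) : 0 ≤ hypergeom m a a' j := by unfold hypergeom; positivity

theorem mean_pos (h1 : 1 ≤ a) (h1' : 1 ≤ a') (ha : a ≤ m) : 0 < (a * a' / m : ℝ) := by
  have : (1 : ℝ) ≤ a := by exact_mod_cast h1
  have : (1 : ℝ) ≤ a' := by exact_mod_cast h1'
  have : (a : ℝ) ≤ m := by exact_mod_cast ha
  exact div_pos (by positivity) (by linarith)

theorem sum_choose_mul (s : ℕ) (ha : a ≤ m) (ha' : a' ≤ m) :
    ∑ j ∈ range (a' + 1), hypergeom m a a' j * j.choose s =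
      a.choose s * a'.choose s / m.choose s := by
  rcases lt_or_ge a' s with hs | hsa'
  · rw [Nat.choose_eq_zero_of_lt hs, sum_eq_zero fun j hj ↦ by
      simp [Nat.choose_eq_zero_of_lt ((mem_range.1 hj).trans_le hs)]]
    simp
  have hm : (m.choose a' : ℝ) ≠ 0 := by exact_mod_cast (Nat.choose_pos ha').ne'
  have hms : (m.choose s : ℝ) ≠ 0 := by exact_mod_cast (Nat.choose_pos (hsa'.trans ha')).ne'
  have hsum := Nat.sum_choose_mul_choose_mul_choose hsa' a (m - a)
  have hcomb := Nat.choose_mul (n := m) hsa'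
  simp only [hypergeom, div_mul_eq_mul_div, ← sum_div]
  rw [div_eq_div_iff hm hms]
  rcases lt_or_ge a s with hs | hsa
  · simp only [Nat.choose_eq_zero_of_lt hs, zero_mul] at hsum ⊢
    exact_mod_cast by simp [hsum]
  rw [show a - s + (m - a) = m - s by omega] at hsum
  exact_mod_cast by
    rw [hsum, mul_assoc, mul_assoc, mul_comm (a'.choose s), hcomb, mul_comm (m.choose s)]

theorem sum_eq_one (ha : a ≤ m) (ha' : a' ≤ m) : ∑ j ∈ range (a' + 1), hypergeom m a a' j = 1 := by
  simpa using sum_choose_mul 0 ha ha'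

theorem sum_mul_eq (ha : a ≤ m) (ha' : a' ≤ m) :
    ∑ j ∈ range (a' + 1), hypergeom m a a' j * j = a * a' / m := by
  simpa using sum_choose_mul 1 ha ha'

theorem sum_mul_sub_one_mul_eq (hm : 2 ≤ m) (ha : a ≤ m) (ha' : a' ≤ m) :
    ∑ j ∈ range (a' + 1), hypergeom m a a' j * (j * (j - 1)) =
      a * (a - 1) * a' * (a' - 1) / (m * (m - 1)) := by
  have h := sum_choose_mul 2 ha ha'
  simp only [Nat.cast_choose_two] at h
  calc _ = 2 * ∑ j ∈ range (a' + 1), hypergeom m a a' j * (j * (j - 1) / 2) := by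
        rw [mul_sum]; exact sum_congr rfl fun j _ ↦ by ring
    _ = _ := by
        have hm : (2 : ℝ) ≤ m := by exact_mod_cast hm
        rw [h]; field_simp

theorem sum_mul_sub_sq_eq (hm : 2 ≤ m) (ha : a ≤ m) (ha' : a' ≤ m) :
    ∑ j ∈ range (a' + 1), hypergeom m a a' j * (j - a * a' / m : ℝ) ^ 2 =
      a * a' * (m - a) * (m - a') / (m ^ 2 * (m - 1)) := by
  set μ : ℝ := a * a' / m
  calc _ = ∑ j ∈ range (a' + 1), hypergeom m a a' j * (j * (j - 1)) +
        (1 - 2 * μ) * ∑ j ∈ range (a' + 1), hypergeom m a a' j * j +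
        μ ^ 2 * ∑ j ∈ range (a' + 1), hypergeom m a a' j := by
        simp only [mul_sum, ← sum_add_distrib]
        exact sum_congr rfl fun j _ ↦ by ring
    _ = _ := by
        have hm' : (m : ℝ) - 1 ≠ 0 := by
          have : (2 : ℝ) ≤ m := by exact_mod_cast hm
          linarith
        rw [sum_mul_sub_one_mul_eq hm ha ha', sum_mul_eq ha ha', sum_eq_one ha ha']
        simp only [μ]
        field_simp
        ring

theorem sum_mul_sub_sq_le (hm : 2 ≤ m) (h1 : 1 ≤ a) (ha : a ≤ m) (ha' : a' ≤ m) :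
    ∑ j ∈ range (a' + 1), hypergeom m a a' j * (j - a * a' / m : ℝ) ^ 2 ≤ a * a' / m := by
  rw [sum_mul_sub_sq_eq hm ha ha']
  have hm : (2 : ℝ) ≤ m := by exact_mod_cast hm
  have h1 : (1 : ℝ) ≤ a := by exact_mod_cast h1
  have ha : (a : ℝ) ≤ m := by exact_mod_cast ha
  have ha' : (a' : ℝ) ≤ m := by exact_mod_cast ha'
  rw [div_le_div_iff₀ (mul_pos (by positivity) (by linarith)) (by positivity)]
  have : (m - a) * (m - a') ≤ (m * (m - 1) : ℝ) := by nlinarith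
  nlinarith [mul_le_mul_of_nonneg_left this (by positivity : (0 : ℝ) ≤ a * a' * m)]

end hypergeom

theorem hypMoment_eq_sum (m a a' : ℕ) (β : ℝ) :
    hypMoment m a a' β = ∑ j ∈ range (a' + 1), hypergeom m a a' j * (j : ℝ) ^ β := by
  rw [hypMoment, sum_subset (range_subset_range.2 (by omega : min a a' + 1 ≤ a' + 1))]
  · exact sum_congr rfl fun j _ ↦ by rw [hypergeom]; ring
  · intro j hj hj'
    have : a < j := by simp only [mem_range] at hj hj'; omega
    simp [Nat.choose_eq_zero_of_lt this]

theorem hypMoment_le {m a a' : ℕ} {β : ℝ} (hβ0 : 0 ≤ β) (hβ1 : β ≤ 1) (ha : a ≤ m)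
    (ha' : a' ≤ m) : hypMoment m a a' β ≤ (a * a' / m : ℝ) ^ β := by
  rw [hypMoment_eq_sum, ← hypergeom.sum_mul_eq ha ha']
  exact sum_mul_rpow_le_rpow_sum_mul hβ0 hβ1 (fun j _ ↦ hypergeom.nonneg j)
    (hypergeom.sum_eq_one ha ha') fun j _ ↦ Nat.cast_nonneg j

theorem le_hypMoment {m a a' : ℕ} {β η : ℝ} (hβ0 : 0 ≤ β) (hβ1 : β ≤ 1) (hη : 0 < η)
    (hm : 2 ≤ m) (h1 : 1 ≤ a) (h1' : 1 ≤ a') (ha : a ≤ m) (ha' : a' ≤ m) :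
    (a * a' / m : ℝ) ^ β * (1 - η - 1 / (η ^ 2 * (a * a' / m))) ≤ hypMoment m a a' β := by
  have hμ := hypergeom.mean_pos h1 h1' ha
  set μ : ℝ := a * a' / m
  rw [hypMoment_eq_sum]
  refine le_trans ?_ (rpow_mul_sub_le_sum_mul_rpow hβ0 hβ1 hμ hη (fun j _ ↦ hypergeom.nonneg j)
    (hypergeom.sum_eq_one ha ha') fun j _ ↦ Nat.cast_nonneg j)
  refine mul_le_mul_of_nonneg_left (sub_le_sub_left ?_ _) (rpow_nonneg hμ.le β)
  calc (∑ j ∈ range (a' + 1), hypergeom m a a' j * (j - μ) ^ 2) / (η * μ) ^ 2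
      ≤ μ / (η * μ) ^ 2 := by gcongr; exact hypergeom.sum_mul_sub_sq_le hm h1 ha ha'
    _ = 1 / (η ^ 2 * μ) := by field_simp

theorem abs_hypMoment_div_sub_one_le {m a a' : ℕ} {β η : ℝ} (hβ0 : 0 ≤ β) (hβ1 : β ≤ 1)
    (hη : 0 < η) (hm : 2 ≤ m) (h1 : 1 ≤ a) (h1' : 1 ≤ a') (ha : a ≤ m) (ha' : a' ≤ m) :
    |hypMoment m a a' β / (a * a' / m : ℝ) ^ β - 1| ≤ η + 1 / (η ^ 2 * (a * a' / m)) := by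
  have hμβ := rpow_pos_of_pos (hypergeom.mean_pos h1 h1' ha) β
  have hup := hypMoment_le hβ0 hβ1 ha ha'
  have hlow := le_hypMoment hβ0 hβ1 hη hm h1 h1' ha ha'
  rw [abs_le, le_sub_iff_add_le, sub_le_iff_le_add, le_div_iff₀ hμβ, div_le_iff₀ hμβ]
  constructor <;> nlinarith [one_div_nonneg.2 (by positivity : 0 ≤ η ^ 2 * (a * a' / m : ℝ))]

theorem hypergeometric_moment_uniform_general (β : ℝ) (hβ0 : 0 < β) (hβ1 : β < 1)
    (ε : ℝ) (hε0 : 0 < ε) :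
    ∀ δ > 0, ∃ M : ℕ, ∀ m ≥ M, ∀ a a' : ℕ,
      ε * m ≤ (a : ℝ) → (a : ℝ) ≤ (1 - ε) * m →
      ε * m ≤ (a' : ℝ) → (a' : ℝ) ≤ (1 - ε) * m →
      |hypMoment m a a' β / ((a : ℝ) * (a' : ℝ) / (m : ℝ)) ^ β - 1| < δ := by
  intro δ hδ
  obtain ⟨M, hM⟩ := exists_nat_gt (2 + 1 / ε + 8 / (δ ^ 3 * ε ^ 2))
  refine ⟨M, fun m hm a a' ha₁ ha₂ ha'₁ ha'₂ ↦ ?_⟩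
  have hmM : 2 + 1 / ε + 8 / (δ ^ 3 * ε ^ 2) < m := hM.trans_le (by exact_mod_cast hm)
  have hpos : 0 < 8 / (δ ^ 3 * ε ^ 2) := by positivity
  have hm2 : (2 : ℝ) ≤ m := by linarith [one_div_pos.2 hε0]
  have hεm : 1 ≤ ε * m := by linarith [(div_lt_iff₀' hε0).1 (show 1 / ε < m by linarith)]
  have hμ : 8 / δ ^ 3 < a * a' / m := calc
    8 / δ ^ 3 = ε ^ 2 * (8 / (δ ^ 3 * ε ^ 2)) := by field_simp
    _ < ε ^ 2 * m := by gcongr; linarith [one_div_pos.2 hε0]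
    _ ≤ a * a' / m := by
      rw [le_div_iff₀ (by linarith)]
      nlinarith [mul_le_mul ha₁ ha'₁ (by linarith) (by linarith)]
  refine (abs_hypMoment_div_sub_one_le hβ0.le hβ1.le (half_pos hδ) (by exact_mod_cast hm2)
    (by exact_mod_cast hεm.trans ha₁) (by exact_mod_cast hεm.trans ha'₁)
    (by exact_mod_cast (show (a : ℝ) ≤ m by nlinarith))
    (by exact_mod_cast (show (a' : ℝ) ≤ m by nlinarith))).trans_lt ?_
  have : 8 < δ ^ 3 * (a * a' / m) := (div_lt_iff₀' (by positivity)).1 hμ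
  have : 1 / ((δ / 2) ^ 2 * (a * a' / m)) < δ / 2 := by
    have : 0 < (a * a' / m : ℝ) := lt_trans (by positivity) hμ
    rw [div_lt_iff₀ (by positivity)]
    nlinarith
  linarith

/-- Uniform convergence of hypergeometric `β`-th moments to `(aa'/m)^β` in the bulk:
for `εm ≤ a, a' ≤ (1-ε)m`, `E[M_{m,a,a'}^β] = (1+o(1)) (aa'/m)^β` uniformly. -/
theorem hypergeometric_moment_uniform (β : ℝ) (hβ0 : 0 < β) (hβ1 : β < 1)
    (ε : ℝ) (hε0 : 0 < ε) (hε : ε < 1 / 2) :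
    ∀ δ > 0, ∃ M : ℕ, ∀ m ≥ M, ∀ a a' : ℕ,
      ε * m ≤ (a : ℝ) → (a : ℝ) ≤ (1 - ε) * m →
      ε * m ≤ (a' : ℝ) → (a' : ℝ) ≤ (1 - ε) * m →
      |hypMoment m a a' β / ((a : ℝ) * (a' : ℝ) / (m : ℝ)) ^ β - 1| < δ :=
  hypergeometric_moment_uniform_general β hβ0 hβ1 ε hε0
end

section
/- Let β ∈ (0, 1), let K ≥ 2 and n ≥ K be integers, and let (X_t)_{t ≥ 0} be a stochastic process on a probability space, taking values in ℕ, adapted to a filtration (F_t), with X_0 = n almost surely, such that almost surely X_{t+1} ≤ X_t for all t, and X_{t+1} < X_t on the event {X_t ≥ K}. Suppose that for every t, almost surely on the event {X_t ≥ K}: E[ X_{t+1}^{β−1} · 1_{X_{t+1} ≥ 1} | F_t ] ≥ X_t^{β−1}. Let S = inf{ t : X_t ≤ K − 1 } (which is almost surely finite, indeed S ≤ n). Then P( X_S ≥ 1 ) ≥ n^{β−1}. -/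
open MeasureTheory Filter Real

/-!
With `φ k = k ^ (β - 1) · 1_{k ≥ 1}`, the stopped process `φ (X (t ∧ S))` has nondecreasing
expectation: from `t` to `t + 1` it only moves on `{t < S} = {K ≤ X t} ∈ F t`, and there the
hypothesis gives `∫ φ (X t) ≤ ∫ E[φ (X (t + 1)) | F t] = ∫ φ (X (t + 1))`. Since `X` decreases
strictly while it is at least `K`, `S ≤ n`, hence
`n ^ (β - 1) = E φ (X 0) ≤ E φ (X (n ∧ S)) = E φ (X S) ≤ P (X S ≥ 1)`, using `φ ≤ 1_{k ≥ 1}`.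
-/

open Set in
theorem measurable_sInf_setOf {Ω : Type*} [MeasurableSpace Ω] {p : Ω → ℕ → Prop}
    (hp : ∀ k, MeasurableSet {ω | p ω k}) : Measurable fun ω => sInf {k | p ω k} := by
  refine measurable_of_Iic fun j => ?_
  -- the second piece comes from the junk value `sInf ∅ = 0`
  have hpre : (fun ω => sInf {k | p ω k}) ⁻¹' Iic j =
      (⋃ k ≤ j, {ω | p ω k}) ∪ ⋂ k, {ω | p ω k}ᶜ := by
    ext ω
    rcases {k | p ω k}.eq_empty_or_nonempty with h | ⟨k₀, hk₀⟩
    · simp_all [Set.eq_empty_iff_forall_notMem]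
    · simp only [mem_preimage, mem_Iic, mem_union, mem_iUnion, mem_iInter, mem_compl_iff,
        mem_ofPred_eq, exists_prop]
      refine ⟨fun hle => Or.inl ⟨_, hle, Nat.sInf_mem ⟨k₀, hk₀⟩⟩, ?_⟩
      rintro (⟨k, hk, hpk⟩ | hnone)
      · exact (Nat.sInf_le hpk).trans hk
      · exact absurd hk₀ (hnone k₀)
  rw [hpre]
  exact (MeasurableSet.biUnion (to_countable _) fun k _ => hp k).union
    (MeasurableSet.iInter fun k => (hp k).compl)

theorem measurable_apply_of_measurable_time {Ω β : Type*} [MeasurableSpace Ω]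
    [MeasurableSpace β] {Y : ℕ → Ω → β} {τ : Ω → ℕ} (hY : ∀ t, Measurable (Y t))
    (hτ : Measurable τ) : Measurable fun ω => Y (τ ω) ω :=
  (measurable_from_prod_countable_left (f := fun p : Ω × ℕ => Y p.2 p.1) hY).comp
    (measurable_id.prodMk hτ)

section Path

variable {x : ℕ → ℕ} {m : ℕ}

theorem apply_add_le_apply_zero (hdec : ∀ t, m < x t → x (t + 1) < x t) :
    ∀ s, (∀ j < s, m < x j) → x s + s ≤ x 0
  | 0, _ => le_rfl
  | s + 1, h => by
    have := apply_add_le_apply_zero hdec s fun j hj => h j (hj.trans s.lt_succ_self)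
    have := hdec s (h s s.lt_succ_self)
    omega

theorem exists_le_apply_zero_apply_le (hdec : ∀ t, m < x t → x (t + 1) < x t) :
    ∃ t ≤ x 0, x t ≤ m := by
  by_contra! h
  have := apply_add_le_apply_zero hdec (x 0 + 1) fun j hj => h j (Nat.le_of_lt_succ hj)
  omega

theorem lt_sInf_iff_of_antitone (hx : Antitone x) (hne : ∃ t, x t ≤ m) {t : ℕ} :
    t < sInf {t | x t ≤ m} ↔ m < x t := by
  refine ⟨fun ht => not_le.1 (Nat.notMem_of_lt_sInf (s := {t | x t ≤ m}) ht),
    fun hxt => not_le.1 fun hle => ?_⟩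
  exact hxt.not_ge ((hx hle).trans (Nat.sInf_mem hne))

end Path

section Stopped

variable {Ω : Type*} {g : ℕ → Ω → ℝ} {τ : Ω → ℕ}

theorem stopped_succ_eq (t : ℕ) (ω : Ω) :
    g (min (t + 1) (τ ω)) ω =
      g (min t (τ ω)) ω + {ω | t < τ ω}.indicator (g (t + 1) - g t) ω := by
  by_cases h : t < τ ω
  · simp [h, min_eq_left h.le]
  · simp [h, min_eq_right (not_lt.1 h), min_eq_right ((not_lt.1 h).trans t.le_succ)]

variable [MeasurableSpace Ω] {μ : Measure Ω}

theorem integrable_stopped (hτ : Measurable τ) (hg : ∀ t, Integrable (g t) μ) (t : ℕ) :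
    Integrable (fun ω => g (min t (τ ω)) ω) μ := by
  induction t with
  | zero => simpa using hg 0
  | succ t ih =>
    simp_rw [stopped_succ_eq t]
    exact ih.add (((hg (t + 1)).sub (hg t)).indicator (hτ measurableSet_Ioi))

theorem monotone_integral_stopped (hτ : Measurable τ) (hg : ∀ t, Integrable (g t) μ)
    (hstep : ∀ t, ∫ ω in {ω | t < τ ω}, g t ω ∂μ ≤ ∫ ω in {ω | t < τ ω}, g (t + 1) ω ∂μ) :
    Monotone fun t => ∫ ω, g (min t (τ ω)) ω ∂μ := by
  refine monotone_nat_of_le_succ fun t => ?_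
  have hB : MeasurableSet {ω | t < τ ω} := hτ measurableSet_Ioi
  have hincrement : 0 ≤ ∫ ω, {ω | t < τ ω}.indicator (g (t + 1) - g t) ω ∂μ := by
    rw [integral_indicator hB]
    simp only [Pi.sub_apply]
    rw [integral_sub (hg (t + 1)).integrableOn (hg t).integrableOn]
    exact sub_nonneg.2 (hstep t)
  simp_rw [stopped_succ_eq t]
  rw [integral_add (integrable_stopped hτ hg t) (((hg (t + 1)).sub (hg t)).indicator hB)]
  linarith

end Stopped

theorem setIntegral_le_setIntegral_of_le_condExp {Ω : Type*} {m m₀ : MeasurableSpace Ω}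
    {μ : Measure Ω} (hm : m ≤ m₀) [SigmaFinite (μ.trim hm)] {f g : Ω → ℝ}
    (hf : Integrable f μ) (hg : Integrable g μ) {s : Set Ω} (hs : MeasurableSet[m] s)
    (hle : ∀ᵐ ω ∂μ, ω ∈ s → f ω ≤ μ[g | m] ω) :
    ∫ ω in s, f ω ∂μ ≤ ∫ ω in s, g ω ∂μ := by
  rw [← setIntegral_condExp hm hg hs]
  refine setIntegral_mono_ae_restrict hf.integrableOn integrable_condExp.integrableOn ?_
  rw [EventuallyLE, ae_restrict_iff' (hm s hs)]
  exact hle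

noncomputable def survivalWeight (β : ℝ) (k : ℕ) : ℝ :=
  (k : ℝ) ^ (β - 1) * if 1 ≤ k then 1 else 0

section SurvivalWeight

variable {β : ℝ} {k : ℕ}

theorem survivalWeight_of_one_le (hk : 1 ≤ k) : survivalWeight β k = (k : ℝ) ^ (β - 1) := by
  simp [survivalWeight, hk]

theorem survivalWeight_nonneg : 0 ≤ survivalWeight β k :=
  mul_nonneg (rpow_nonneg k.cast_nonneg _) (by split_ifs <;> norm_num)

theorem survivalWeight_le_ite (hβ : β ≤ 1) : survivalWeight β k ≤ if 1 ≤ k then 1 else 0 := by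
  split_ifs with hk
  · rw [survivalWeight_of_one_le hk]
    exact rpow_le_one_of_one_le_of_nonpos (by exact_mod_cast hk) (by linarith)
  · simp [survivalWeight, hk]

theorem integrable_survivalWeight_comp {Ω : Type*} [MeasurableSpace Ω] {μ : Measure Ω}
    [IsFiniteMeasure μ] (hβ : β ≤ 1) {Y : Ω → ℕ} (hY : Measurable Y) :
    Integrable (fun ω => survivalWeight β (Y ω)) μ := by
  refine .of_bound ((measurable_from_top (f := survivalWeight β)).comp hY).aestronglyMeasurable 1
    (ae_of_all _ fun ω => ?_)
  rw [Real.norm_of_nonneg survivalWeight_nonneg]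
  exact (survivalWeight_le_ite hβ).trans (by split_ifs <;> norm_num)

end SurvivalWeight

theorem hitting_probability_lower_bound_general
    {Ω : Type*} [m0 : MeasurableSpace Ω] (P : Measure Ω) [IsProbabilityMeasure P]
    (β : ℝ) (hβ1 : β < 1)
    (K n : ℕ) (hK : 2 ≤ K) (hn : K ≤ n)
    (F : Filtration ℕ m0) (X : ℕ → Ω → ℕ)
    (hadapted : ∀ t, @Measurable Ω ℕ (F t) _ (X t))
    (h0 : ∀ᵐ ω ∂P, X 0 ω = n)
    (hmono : ∀ᵐ ω ∂P, ∀ t, X (t + 1) ω ≤ X t ω ∧ (K ≤ X t ω → X (t + 1) ω < X t ω))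
    (hstep : ∀ t, ∀ᵐ ω ∂P, K ≤ X t ω →
      ((X t ω : ℝ)) ^ (β - 1) ≤
        (P[fun ω' => ((X (t + 1) ω' : ℝ)) ^ (β - 1) *
            (if 1 ≤ X (t + 1) ω' then (1 : ℝ) else 0) | F t]) ω)
    (S : Ω → ℕ) (hS : ∀ ω, S ω = sInf {t | X t ω ≤ K - 1}) :
    ENNReal.ofReal ((n : ℝ) ^ (β - 1)) ≤ P {ω | 1 ≤ X (S ω) ω} := by
  have hXm : ∀ t, Measurable (X t) := fun t => (hadapted t).mono (F.le t) le_rfl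
  have hSm : Measurable S := funext hS ▸ measurable_sInf_setOf fun k => hXm k measurableSet_Iic
  have hpath : ∀ᵐ ω ∂P, S ω ≤ n ∧ ∀ t, (t < S ω ↔ K ≤ X t ω) := by
    filter_upwards [h0, hmono] with ω hω0 hωm
    have hdec : ∀ t, K - 1 < X t ω → X (t + 1) ω < X t ω := fun t ht => (hωm t).2 (by omega)
    obtain ⟨t₀, ht₀n, ht₀⟩ := exists_le_apply_zero_apply_le hdec
    refine ⟨hS ω ▸ (Nat.sInf_le (s := {t | X t ω ≤ K - 1}) ht₀).trans (hω0 ▸ ht₀n), fun t => ?_⟩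
    rw [hS, lt_sInf_iff_of_antitone (antitone_nat_of_succ_le fun t => (hωm t).1) ⟨t₀, ht₀⟩]
    omega
  set w : ℕ → Ω → ℝ := fun t ω => survivalWeight β (X t ω)
  have hw : ∀ t, Integrable (w t) P := fun t => integrable_survivalWeight_comp hβ1.le (hXm t)
  have hsub : ∀ t, ∫ ω in {ω | t < S ω}, w t ω ∂P ≤ ∫ ω in {ω | t < S ω}, w (t + 1) ω ∂P := by
    intro t
    have hset : {ω | t < S ω} =ᵐ[P] {ω | K ≤ X t ω} := hpath.mono fun ω hω => propext (hω.2 t)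
    rw [setIntegral_congr_set hset, setIntegral_congr_set hset]
    refine setIntegral_le_setIntegral_of_le_condExp (F.le t) (hw t) (hw (t + 1))
      (hadapted t measurableSet_Ici) ?_
    filter_upwards [hstep t] with ω hω hKX
    exact (survivalWeight_of_one_le (by omega)).trans_le (hω hKX)
  have hstart : w 0 =ᵐ[P] fun _ => (n : ℝ) ^ (β - 1) := h0.mono fun ω hω => by
    simp only [w, hω, survivalWeight_of_one_le (by omega : 1 ≤ n)]
  have hD : MeasurableSet {ω | 1 ≤ X (S ω) ω} :=
    measurable_apply_of_measurable_time hXm hSm measurableSet_Ici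
  have hend : ∫ ω, w (min n (S ω)) ω ∂P ≤ P.real {ω | 1 ≤ X (S ω) ω} := by
    rw [← integral_indicator_one hD]
    refine integral_mono_ae (integrable_stopped hSm hw n) ((integrable_const 1).indicator hD) ?_
    filter_upwards [hpath] with ω hω
    rw [min_eq_right hω.1, Set.indicator_apply]
    exact survivalWeight_le_ite hβ1.le
  refine ENNReal.ofReal_le_of_le_toReal ?_
  calc (n : ℝ) ^ (β - 1) = ∫ ω, w (min 0 (S ω)) ω ∂P := by simp [integral_congr_ae hstart]
    _ ≤ ∫ ω, w (min n (S ω)) ω ∂P := monotone_integral_stopped hSm hw hsub n.zero_le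
    _ ≤ P.real {ω | 1 ≤ X (S ω) ω} := hend

/-- Optional-sampling lower bound for the size chain: if `X` starts at `n`, is
nonincreasing, strictly decreases while `≥ K`, and
`E[X_{t+1}^{β-1} 1_{X_{t+1} ≥ 1} | F_t] ≥ X_t^{β-1}` on `{X_t ≥ K}`, then the
probability of entering `{1, …, K-1}` (rather than hitting `0`) is at least
`n^{β-1}`. -/
theorem hitting_probability_lower_bound
    {Ω : Type*} [m0 : MeasurableSpace Ω] (P : Measure Ω) [IsProbabilityMeasure P]
    (β : ℝ) (hβ0 : 0 < β) (hβ1 : β < 1)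
    (K n : ℕ) (hK : 2 ≤ K) (hn : K ≤ n)
    (F : Filtration ℕ m0) (X : ℕ → Ω → ℕ)
    (hadapted : ∀ t, @Measurable Ω ℕ (F t) _ (X t))
    (h0 : ∀ᵐ ω ∂P, X 0 ω = n)
    (hmono : ∀ᵐ ω ∂P, ∀ t, X (t + 1) ω ≤ X t ω ∧ (K ≤ X t ω → X (t + 1) ω < X t ω))
    (hstep : ∀ t, ∀ᵐ ω ∂P, K ≤ X t ω →
      ((X t ω : ℝ)) ^ (β - 1) ≤
        (P[fun ω' => ((X (t + 1) ω' : ℝ)) ^ (β - 1) *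
            (if 1 ≤ X (t + 1) ω' then (1 : ℝ) else 0) | F t]) ω)
    (S : Ω → ℕ) (hS : ∀ ω, S ω = sInf {t | X t ω ≤ K - 1}) :
    ENNReal.ofReal ((n : ℝ) ^ (β - 1)) ≤ P {ω | 1 ≤ X (S ω) ω} :=
  hitting_probability_lower_bound_general (m0 := m0) P β hβ1 K n hK hn F X hadapted h0 hmono hstep S
    hS
end
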